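/- For any K ∈ ℕ, there exists a function f : ℝ → ℝ expressible as a network of width 2 using ReLU (x ↦ max(x,0)) and threshold (x ↦ 1 if x ≥ 0, else 0) activations such that f(x) = q_K(x) for all x ∈ [0,1], where q_K(x) = max{k·2^{-K} : k ∈ ℕ, k·2^{-K} ≤ x, k < 2^K} for x ∈ [0,1) and q_K(1) = 1 − 2^{-K}. -/
import Mathlib


/-- Apply either ReLU (`true`) or the Heaviside step (`false`) activation. -/
noncomputable def act (c : Bool) (x : ℝ) : ℝ := if c then max x 0 else (if 0 ≤ x then 1 else 0)

/-- Coordinatewise activation on ℝ², with a choice of ReLU/step per unit. -/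
noncomputable def act2 (c : Fin 2 → Bool) (v : Fin 2 → ℝ) : Fin 2 → ℝ := fun i => act (c i) (v i)

/-- Composition of `L` hidden layers of the form `σ ∘ t_ℓ` on ℝ², with per-unit
ReLU/step activation choices. -/
noncomputable def hiddenComp : (L : ℕ) → (ℕ → (Fin 2 → ℝ) →ᵃ[ℝ] (Fin 2 → ℝ)) → (ℕ → Fin 2 → Bool) →
    (Fin 2 → ℝ) → (Fin 2 → ℝ)
  | 0, _, _ => id
  | L + 1, ts, cs => (fun v => act2 (cs L) (ts L v)) ∘ hiddenComp L ts cs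

/-- `f : ℝ → ℝ` is a ReLU+Step network of width 2. -/
def IsReLUStepNet2 (f : ℝ → ℝ) : Prop :=
  ∃ (L : ℕ) (t1 : ℝ →ᵃ[ℝ] (Fin 2 → ℝ)) (c1 : Fin 2 → Bool)
    (ts : ℕ → (Fin 2 → ℝ) →ᵃ[ℝ] (Fin 2 → ℝ)) (cs : ℕ → Fin 2 → Bool)
    (tL : (Fin 2 → ℝ) →ᵃ[ℝ] ℝ),
    f = fun x => tL (hiddenComp L ts cs (act2 c1 (t1 x)))

/-! ### Auxiliary constructions -/

lemma hiddenComp_succ (L : ℕ) (ts : ℕ → (Fin 2 → ℝ) →ᵃ[ℝ] (Fin 2 → ℝ))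
    (cs : ℕ → Fin 2 → Bool) (v : Fin 2 → ℝ) :
    hiddenComp (L+1) ts cs v = act2 (cs L) (ts L (hiddenComp L ts cs v)) := rfl

lemma hiddenComp_zero (ts : ℕ → (Fin 2 → ℝ) →ᵃ[ℝ] (Fin 2 → ℝ))
    (cs : ℕ → Fin 2 → Bool) (v : Fin 2 → ℝ) :
    hiddenComp 0 ts cs v = v := rfl

noncomputable def aff1 (a b : Fin 2 → ℝ) : ℝ →ᵃ[ℝ] (Fin 2 → ℝ) where
  toFun x := fun i => a i * x + b i
  linear :=
    { toFun := fun x i => a i * x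
      map_add' := by intro p q; funext i; simp [mul_add]
      map_smul' := by intro c p; funext i; simp [smul_eq_mul]; ring }
  map_vadd' := by intro p v; funext i; simp [vadd_eq_add]; ring

noncomputable def aff2 (A : Fin 2 → Fin 2 → ℝ) (b : Fin 2 → ℝ) :
    (Fin 2 → ℝ) →ᵃ[ℝ] (Fin 2 → ℝ) where
  toFun v := fun i => A i 0 * v 0 + A i 1 * v 1 + b i
  linear :=
    { toFun := fun v i => A i 0 * v 0 + A i 1 * v 1
      map_add' := by intro p q; funext i; simp; ring
      map_smul' := by intro c p; funext i; simp [smul_eq_mul]; ring }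
  map_vadd' := by intro p v; funext i; simp [vadd_eq_add]; ring

noncomputable def affL (a : Fin 2 → ℝ) (b : ℝ) : (Fin 2 → ℝ) →ᵃ[ℝ] ℝ where
  toFun v := a 0 * v 0 + a 1 * v 1 + b
  linear :=
    { toFun := fun v => a 0 * v 0 + a 1 * v 1
      map_add' := by intro p q; simp; ring
      map_smul' := by intro c p; simp [smul_eq_mul]; ring }
  map_vadd' := by intro p v; simp [vadd_eq_add]; ring

lemma aff1_apply (a b : Fin 2 → ℝ) (x : ℝ) (i : Fin 2) :
    aff1 a b x i = a i * x + b i := rfl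
lemma aff2_apply (A : Fin 2 → Fin 2 → ℝ) (b v : Fin 2 → ℝ) (i : Fin 2) :
    aff2 A b v i = A i 0 * v 0 + A i 1 * v 1 + b i := rfl
lemma affL_apply (a : Fin 2 → ℝ) (b : ℝ) (v : Fin 2 → ℝ) :
    affL a b v = a 0 * v 0 + a 1 * v 1 + b := rfl

/-- threshold of block `ℓ` -/
noncomputable def thetaK (K ℓ : ℕ) : ℝ := if ℓ + 1 = 2^K then 2 else ((ℓ:ℝ)+1)/2^K

noncomputable def Amap (K ℓ : ℕ) : (Fin 2 → ℝ) →ᵃ[ℝ] (Fin 2 → ℝ) :=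
  aff2 ![![-1,1],![-1,1]] ![(((ℓ-1:ℕ)):ℝ)/2^K, (((ℓ-1:ℕ)):ℝ)/2^K - thetaK K ℓ]
noncomputable def Bmap (K ℓ : ℕ) : (Fin 2 → ℝ) →ᵃ[ℝ] (Fin 2 → ℝ) :=
  aff2 ![![1,0],![1,1]] ![0, -((ℓ:ℝ)/2^K) - 1]
noncomputable def Cmap (K ℓ : ℕ) : (Fin 2 → ℝ) →ᵃ[ℝ] (Fin 2 → ℝ) :=
  aff2 ![![-1,0],![0,1]] ![(ℓ:ℝ)/2^K, 0]

noncomputable def tsK (K : ℕ) (m : ℕ) : (Fin 2 → ℝ) →ᵃ[ℝ] (Fin 2 → ℝ) :=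
  if m % 3 = 0 then Bmap K (m/3) else if m % 3 = 1 then Cmap K (m/3) else Amap K ((m+1)/3)

def csK (m : ℕ) : Fin 2 → Bool := if m % 3 = 2 then ![true, false] else ![true, true]

noncomputable def t1K (K : ℕ) : ℝ →ᵃ[ℝ] (Fin 2 → ℝ) := aff1 ![1,1] ![0, -(thetaK K 0)]
noncomputable def tLK (K : ℕ) : (Fin 2 → ℝ) →ᵃ[ℝ] ℝ := affL ![-1,1] ((((2^K-1:ℕ)):ℝ)/2^K)

lemma tsK_B (K ℓ : ℕ) : tsK K (3*ℓ) = Bmap K ℓ := by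
  have h1 : (3*ℓ) % 3 = 0 := by omega
  have h2 : (3*ℓ) / 3 = ℓ := by omega
  simp [tsK, h1, h2]
lemma tsK_C (K ℓ : ℕ) : tsK K (3*ℓ+1) = Cmap K ℓ := by
  have h1 : (3*ℓ+1) % 3 = 1 := by omega
  have h2 : (3*ℓ+1) / 3 = ℓ := by omega
  simp [tsK, h1, h2]
lemma tsK_A (K ℓ : ℕ) : tsK K (3*ℓ+2) = Amap K (ℓ+1) := by
  have h1 : (3*ℓ+2) % 3 = 2 := by omega
  have h2 : (3*ℓ+2+1) / 3 = ℓ+1 := by omega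
  simp [tsK, h1, h2]
lemma csK_B (ℓ : ℕ) : csK (3*ℓ) = ![true, true] := by
  have h1 : (3*ℓ) % 3 = 0 := by omega
  simp [csK, h1]
lemma csK_C (ℓ : ℕ) : csK (3*ℓ+1) = ![true, true] := by
  have h1 : (3*ℓ+1) % 3 = 1 := by omega
  simp [csK, h1]
lemma csK_A (ℓ : ℕ) : csK (3*ℓ+2) = ![true, false] := by
  have h1 : (3*ℓ+2) % 3 = 2 := by omega
  simp [csK, h1]

lemma act2_tt (v : Fin 2 → ℝ) :
    act2 ![true, true] v = ![max (v 0) 0, max (v 1) 0] := by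
  funext i; fin_cases i <;> simp [act2, act]
lemma act2_tf (v : Fin 2 → ℝ) :
    act2 ![true, false] v = ![max (v 0) 0, if 0 ≤ v 1 then 1 else 0] := by
  funext i; fin_cases i <;> simp [act2, act]

lemma t1K_eval (K : ℕ) (x : ℝ) :
    act2 ![true, false] (t1K K x) = ![max x 0, if thetaK K 0 ≤ x then 1 else 0] := by
  rw [act2_tf]
  have h0 : t1K K x 0 = x := by simp [t1K, aff1_apply]
  have h1 : t1K K x 1 = x - thetaK K 0 := by simp [t1K, aff1_apply]; ring
  rw [h0, h1]; simp only [sub_nonneg]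

lemma Amap_eval (K ℓ : ℕ) (p u : ℝ) :
    act2 ![true, false] (Amap K (ℓ+1) ![p, u])
      = ![max ((ℓ:ℝ)/2^K - p + u) 0,
          if 0 ≤ (ℓ:ℝ)/2^K - p + u - thetaK K (ℓ+1) then 1 else 0] := by
  rw [act2_tf]
  have h0 : Amap K (ℓ+1) ![p,u] 0 = (ℓ:ℝ)/2^K - p + u := by
    simp [Amap, aff2_apply]; ring
  have h1 : Amap K (ℓ+1) ![p,u] 1 = (ℓ:ℝ)/2^K - p + u - thetaK K (ℓ+1) := by
    simp [Amap, aff2_apply]; ring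
  rw [h0, h1]

lemma Bmap_eval (K ℓ : ℕ) (y w : ℝ) :
    act2 ![true, true] (Bmap K ℓ ![y, w])
      = ![max y 0, max (y - (ℓ:ℝ)/2^K - 1 + w) 0] := by
  rw [act2_tt]
  have h0 : Bmap K ℓ ![y,w] 0 = y := by simp [Bmap, aff2_apply]
  have h1 : Bmap K ℓ ![y,w] 1 = y - (ℓ:ℝ)/2^K - 1 + w := by
    simp [Bmap, aff2_apply]; ring
  rw [h0, h1]

lemma Cmap_eval (K ℓ : ℕ) (y u : ℝ) :
    act2 ![true, true] (Cmap K ℓ ![y, u])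
      = ![max ((ℓ:ℝ)/2^K - y) 0, max u 0] := by
  rw [act2_tt]
  have h0 : Cmap K ℓ ![y,u] 0 = (ℓ:ℝ)/2^K - y := by simp [Cmap, aff2_apply]; ring
  have h1 : Cmap K ℓ ![y,u] 1 = u := by simp [Cmap, aff2_apply]
  rw [h0, h1]

lemma tLK_eval (K : ℕ) (p u : ℝ) :
    tLK K ![p, u] = (((2^K-1:ℕ)):ℝ)/2^K - p + u := by
  rw [tLK, affL_apply]; simp; ring

/-! ### Arithmetic lemmas -/

lemma blockEq (y a θ : ℝ) (hy1 : y ≤ 1) (ha : 0 ≤ a) (haθ : a ≤ θ) :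
    a - max (a - y) 0 + max (y - a - 1 + (if θ ≤ y then (1:ℝ) else 0)) 0
      = if θ ≤ y then y else min y a := by
  by_cases h : θ ≤ y
  · rw [if_pos h, if_pos h, max_eq_right (by linarith : a - y ≤ 0),
      max_eq_left (by linarith : (0:ℝ) ≤ y - a - 1 + 1)]
    ring
  · rw [if_neg h, if_neg h, max_eq_right (by linarith : y - a - 1 + 0 ≤ 0)]
    rcases le_total a y with hay | hay
    · rw [max_eq_right (by linarith : a - y ≤ 0), min_eq_right hay]; ring
    · rw [max_eq_left (by linarith : (0:ℝ) ≤ a - y), min_eq_left hay]; ring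

noncomputable def Yc (K : ℕ) (x v : ℝ) (ℓ : ℕ) : ℝ :=
  if (ℓ:ℝ)/2^K ≤ x ∧ ℓ < 2^K then x else v

lemma a_le_theta (K ℓ : ℕ) (hℓ : ℓ < 2^K) : (ℓ:ℝ)/2^K ≤ thetaK K ℓ := by
  have h2K : (0:ℝ) < 2^K := by positivity
  have hc : (ℓ:ℝ) ≤ 2^K := by
    have : (ℓ:ℝ) ≤ ((2^K : ℕ) : ℝ) := by exact_mod_cast hℓ.le
    simpa using this
  unfold thetaK
  split_ifs with h
  · calc (ℓ:ℝ)/2^K ≤ 1 := by rw [div_le_one h2K]; exact hc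
      _ ≤ 2 := by norm_num
  · gcongr
    linarith

lemma Yc_step (K : ℕ) (x : ℝ) (hx0 : 0 ≤ x) (hx1 : x ≤ 1) (v : ℝ)
    (hv : v = ((min (⌊x * 2^K⌋.toNat) (2^K-1) : ℕ) : ℝ)/2^K) (ℓ : ℕ) (hℓ : ℓ < 2^K) :
    (if thetaK K ℓ ≤ Yc K x v ℓ then Yc K x v ℓ else min (Yc K x v ℓ) ((ℓ:ℝ)/2^K))
      = Yc K x v (ℓ+1) := by
  have h2K : (0:ℝ) < 2^K := by positivity
  have hfl0 : 0 ≤ ⌊x * 2^K⌋ := Int.floor_nonneg.2 (by positivity)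
  have htofl : ((⌊x * 2^K⌋.toNat : ℕ) : ℝ) = ((⌊x * 2^K⌋ : ℤ) : ℝ) := by
    rw [← Int.cast_natCast, Int.toNat_of_nonneg hfl0]
  have hvx : v ≤ x := by
    rw [hv, div_le_iff₀ h2K]
    calc ((min (⌊x * 2^K⌋.toNat) (2^K-1) : ℕ) : ℝ) ≤ ((⌊x * 2^K⌋.toNat : ℕ) : ℝ) := by
          exact_mod_cast min_le_left _ _
      _ = ((⌊x * 2^K⌋ : ℤ) : ℝ) := htofl
      _ ≤ x * 2^K := Int.floor_le _
  by_cases hA : (ℓ:ℝ)/2^K ≤ x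
  · have hYl : Yc K x v ℓ = x := if_pos ⟨hA, hℓ⟩
    have hge : ℓ ≤ ⌊x * 2^K⌋.toNat := by
      have : (ℓ:ℤ) ≤ ⌊x * 2^K⌋ := by
        rw [Int.le_floor]
        push_cast
        exact (div_le_iff₀ h2K).1 hA
      omega
    by_cases hlast : ℓ + 1 = 2^K
    · have hθ : thetaK K ℓ = 2 := if_pos hlast
      have hnot : ¬ thetaK K ℓ ≤ Yc K x v ℓ := by rw [hθ, hYl]; intro h; linarith
      rw [if_neg hnot, hYl, min_eq_right hA]
      have hYl1 : Yc K x v (ℓ+1) = v := by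
        apply if_neg; rintro ⟨-, h2⟩; omega
      have hmin : min (⌊x * 2^K⌋.toNat) (2^K-1) = ℓ := by omega
      rw [hYl1, hv, hmin]
    · by_cases hB : ((ℓ:ℝ)+1)/2^K ≤ x
      · have hθ : thetaK K ℓ = ((ℓ:ℝ)+1)/2^K := if_neg hlast
        have hyes : thetaK K ℓ ≤ Yc K x v ℓ := by rw [hθ, hYl]; exact hB
        rw [if_pos hyes, hYl]
        have : Yc K x v (ℓ+1) = x := by
          apply if_pos
          constructor
          · push_cast; exact hB
          · omega
        rw [this]
      · have hθ : thetaK K ℓ = ((ℓ:ℝ)+1)/2^K := if_neg hlast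
        have hnot : ¬ thetaK K ℓ ≤ Yc K x v ℓ := by rw [hθ, hYl]; exact hB
        rw [if_neg hnot, hYl, min_eq_right hA]
        have hlt : ⌊x * 2^K⌋.toNat < ℓ + 1 := by
          have : ⌊x * 2^K⌋ < (ℓ:ℤ) + 1 := by
            rw [Int.floor_lt]
            push_cast
            have := (lt_div_iff₀ h2K).1 (lt_of_not_ge hB)
            linarith
          omega
        have hmin : min (⌊x * 2^K⌋.toNat) (2^K-1) = ℓ := by omega
        have hYl1 : Yc K x v (ℓ+1) = v := by
          apply if_neg
          rintro ⟨h1, -⟩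
          apply hB
          calc ((ℓ:ℝ)+1)/2^K = ((ℓ+1:ℕ):ℝ)/2^K := by push_cast; ring
            _ ≤ x := h1
        rw [hYl1, hv, hmin]
  · have hYl : Yc K x v ℓ = v := if_neg (by rintro ⟨h1, -⟩; exact hA h1)
    have hvlt : v < (ℓ:ℝ)/2^K := lt_of_le_of_lt hvx (lt_of_not_ge hA)
    have hnot : ¬ thetaK K ℓ ≤ Yc K x v ℓ := by
      rw [hYl]
      exact not_le.2 (lt_of_lt_of_le hvlt (a_le_theta K ℓ hℓ))
    rw [if_neg hnot, hYl, min_eq_left hvlt.le]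
    have hYl1 : Yc K x v (ℓ+1) = v := by
      apply if_neg
      rintro ⟨h1, -⟩
      apply hA
      refine le_trans ?_ h1
      gcongr
      linarith
    rw [hYl1]

theorem stmt_12 (K : ℕ) (q : ℝ → ℝ)
    (hq : ∀ x ∈ Set.Icc (0:ℝ) 1,
      IsGreatest {c : ℝ | (∃ k : ℕ, k < 2 ^ K ∧ c = (k : ℝ) / 2 ^ K) ∧ c ≤ x} (q x)) :
    ∃ f : ℝ → ℝ, IsReLUStepNet2 f ∧ ∀ x ∈ Set.Icc (0:ℝ) 1, f x = q x := by
  classical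
  refine ⟨fun x => tLK K (hiddenComp (3*(2^K-1)+2) (tsK K) csK (act2 ![true,false] (t1K K x))),
    ⟨3*(2^K-1)+2, t1K K, ![true,false], tsK K, csK, tLK K, rfl⟩, ?_⟩
  intro x hx
  obtain ⟨hx0, hx1⟩ := hx
  have h2K : (0:ℝ) < 2^K := by positivity
  have hNpos : (0:ℕ) < 2^K := by positivity
  set k : ℕ := min (⌊x * 2^K⌋.toNat) (2^K-1) with hk
  set v : ℝ := (k:ℝ)/2^K with hvdef
  have hv : v = ((min (⌊x * 2^K⌋.toNat) (2^K-1) : ℕ) : ℝ)/2^K := by rw [hvdef, hk]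
  have hfl0 : 0 ≤ ⌊x * 2^K⌋ := Int.floor_nonneg.2 (by positivity)
  have htofl : ((⌊x * 2^K⌋.toNat : ℕ) : ℝ) = ((⌊x * 2^K⌋ : ℤ) : ℝ) := by
    rw [← Int.cast_natCast, Int.toNat_of_nonneg hfl0]
  have hvx : v ≤ x := by
    rw [hvdef, div_le_iff₀ h2K]
    calc ((k:ℕ):ℝ) ≤ ((⌊x * 2^K⌋.toNat : ℕ) : ℝ) := by
          rw [hk]; exact_mod_cast min_le_left _ _
      _ = ((⌊x * 2^K⌋ : ℤ) : ℝ) := htofl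
      _ ≤ x * 2^K := Int.floor_le _
  have hv0 : 0 ≤ v := by positivity
  have hv1 : v ≤ 1 := by
    rw [hvdef, div_le_one h2K]
    have hkK : k < 2^K := by omega
    calc (k:ℝ) ≤ ((2^K:ℕ):ℝ) := by exact_mod_cast hkK.le
      _ = 2^K := by push_cast; ring
  have hqv : q x = v := by
    apply (hq x ⟨hx0, hx1⟩).unique
    constructor
    · exact ⟨⟨k, by omega, hvdef⟩, hvx⟩
    · rintro c ⟨⟨k', hk', rfl⟩, hcx⟩
      rw [hvdef]
      have h1 : (k':ℤ) ≤ ⌊x * 2^K⌋ := by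
        rw [Int.le_floor]; push_cast
        exact (div_le_iff₀ h2K).1 hcx
      have hkk : k' ≤ k := by omega
      have hkk' : (k':ℝ) ≤ (k:ℝ) := by exact_mod_cast hkk
      gcongr
  set Y : ℕ → ℝ := Yc K x v with hY
  have hYmem : ∀ ℓ, Y ℓ = x ∨ Y ℓ = v := by
    intro ℓ; rw [hY]; unfold Yc; split_ifs <;> tauto
  have hY0' : ∀ ℓ, 0 ≤ Y ℓ := by
    intro ℓ; rcases hYmem ℓ with h|h <;> rw [h] <;> assumption
  have hY1' : ∀ ℓ, Y ℓ ≤ 1 := by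
    intro ℓ; rcases hYmem ℓ with h|h <;> rw [h] <;> assumption
  have hY0 : Y 0 = x := by
    rw [hY]; unfold Yc
    exact if_pos ⟨by simpa using hx0, hNpos⟩
  have hYN : Y (2^K) = v := by
    rw [hY]; unfold Yc
    apply if_neg; rintro ⟨-, h⟩; omega
  have hkey : ∀ ℓ : ℕ, ℓ < 2^K →
      (ℓ:ℝ)/2^K - max ((ℓ:ℝ)/2^K - Y ℓ) 0
        + max (Y ℓ - (ℓ:ℝ)/2^K - 1 + (if thetaK K ℓ ≤ Y ℓ then 1 else 0)) 0 = Y (ℓ+1) := by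
    intro ℓ hℓ
    rw [blockEq (Y ℓ) _ _ (hY1' ℓ) (by positivity) (a_le_theta K ℓ hℓ)]
    exact Yc_step K x hx0 hx1 v hv ℓ hℓ
  have claim : ∀ ℓ, ℓ < 2^K →
      hiddenComp (3*ℓ+2) (tsK K) csK (act2 ![true,false] (t1K K x))
        = ![max ((ℓ:ℝ)/2^K - Y ℓ) 0,
            max (Y ℓ - (ℓ:ℝ)/2^K - 1 + (if thetaK K ℓ ≤ Y ℓ then 1 else 0)) 0] := by
    intro ℓ
    induction ℓ with
    | zero =>
      intro _
      have e : 3*0+2 = 0+1+1 := by norm_num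
      rw [e, hiddenComp_succ, hiddenComp_succ, hiddenComp_zero]
      have eB : tsK K 0 = Bmap K 0 := by simpa using tsK_B K 0
      have eC : tsK K (0+1) = Cmap K 0 := by simpa using tsK_C K 0
      have cB : csK 0 = ![true, true] := by simpa using csK_B 0
      have cC : csK (0+1) = ![true, true] := by simpa using csK_C 0
      rw [eB, eC, cB, cC, t1K_eval, max_eq_left hx0, ← hY0, Bmap_eval,
        max_eq_left (hY0' 0), Cmap_eval, max_eq_left (le_max_right _ _)]
    | succ n ihn =>
      intro hn1
      have hn : n < 2^K := by omega
      have e : 3*(n+1)+2 = (3*n+2)+1+1+1 := by ring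
      rw [e, hiddenComp_succ, hiddenComp_succ, hiddenComp_succ, ihn hn]
      rw [tsK_A K n, csK_A n, Amap_eval, hkey n hn,
        max_eq_left (hY0' (n+1))]
      simp only [sub_nonneg]
      rw [show (3*n+2)+1 = 3*(n+1) by ring, tsK_B, csK_B, Bmap_eval,
        max_eq_left (hY0' (n+1))]
      rw [show 3*n+4 = 3*(n+1)+1 by ring, tsK_C, csK_C, Cmap_eval,
        max_eq_left (le_max_right _ _)]
  show tLK K (hiddenComp (3*(2^K-1)+2) (tsK K) csK (act2 ![true,false] (t1K K x))) = q x
  rw [claim (2^K-1) (by omega), hqv, tLK_eval]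
  have hfin := hkey (2^K-1) (by omega)
  have e2 : 2^K - 1 + 1 = 2^K := Nat.succ_pred_eq_of_pos hNpos
  rw [e2, hYN] at hfin
  exact hfin
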